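/- For all u, w ∈ (0,1) with u ≠ w, one has (1/2)·(u−w)·(J(w)−J(u)) ≥ |u−w| · J(L⁻¹((H₂(u)+H₂(w))/|u−w|)); that is, κ(u,w) ≥ 0 for all u,w ∈ (0,1). -/

import Mathlib

/-- Binary entropy function. -/
noncomputable def H2 (x : ℝ) : ℝ := -x * Real.logb 2 x - (1 - x) * Real.logb 2 (1 - x)

/-- `J`, the derivative of the binary entropy function. -/
noncomputable def J (x : ℝ) : ℝ := Real.logb 2 ((1 - x) / x)

/-- `L(u) = 2·H₂(u)/(1 − 2u)` for `u ∈ [0,1/2)` (with `L(0) = 0`). -/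
noncomputable def L (u : ℝ) : ℝ := 2 * H2 u / (1 - 2 * u)

/-- `L⁻¹ : [0,∞) → [0,1/2)`, the inverse of `L`. -/
noncomputable def Linv : ℝ → ℝ := Function.invFunOn L (Set.Ico 0 (1 / 2))

/-- The function `κ`. -/
noncomputable def kappa (u w : ℝ) : ℝ :=
  if u = w then 0
  else (u - w) * (J w - J u) / 2 - |u - w| * J (Linv ((H2 u + H2 w) / |u - w|))

/-!
Write `u = σ x`, `w = σ y` with `y < x`, where `σ = sigmoid`. Then
`J (σ x) = -x / log 2`, so the left side is `(u - w) * J v` with `v = σ ((y - x) / 2) < 1 / 2`.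
As `L` is increasing on `[0, 1/2)` and `J` is decreasing, the claim reduces to
`(u - w) * L v ≤ H₂ u + H₂ w`. Put `φ z = binEntropy (σ z) / σ z`; then `φ (-z) = e^z φ z`, and
`φ` is convex because `φ'' z = e^(-z) (log (1 + e^z) - σ z) ≥ 0`. After clearing denominators the
reduced inequality is `e^x` times midpoint convexity of `φ` at `x, -y` plus `e^y` times midpoint
convexity at `-x, y`.
-/

open Real Set Filter Topology

lemma H2_eq_binEntropy_div_log_two (x : ℝ) : H2 x = binEntropy x / log 2 := by
  rw [H2, binEntropy, logb, logb, log_inv, log_inv]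
  ring

lemma H2_pos {x : ℝ} (h₀ : 0 < x) (h₁ : x < 1) : 0 < H2 x := by
  rw [H2_eq_binEntropy_div_log_two]
  exact div_pos (binEntropy_pos h₀ h₁) (log_pos one_lt_two)

lemma continuous_H2 : Continuous H2 := by
  rw [funext H2_eq_binEntropy_div_log_two]
  exact binEntropy_continuous.div_const _

lemma monotoneOn_H2 : MonotoneOn H2 (Icc 0 (1 / 2)) := by
  rw [funext H2_eq_binEntropy_div_log_two, one_div]
  exact fun p hp q hq hpq => div_le_div_of_nonneg_right
    (binEntropy_strictMonoOn.monotoneOn hp hq hpq) (log_pos one_lt_two).le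

lemma exp_eq_exp_mul_exp_half_sub_sq (x y : ℝ) : exp x = exp y * exp ((x - y) / 2) ^ 2 := by
  rw [sq, ← exp_add, ← exp_add]
  congr 1
  ring

lemma binEntropy_sigmoid_neg (x : ℝ) : binEntropy (sigmoid (-x)) = binEntropy (sigmoid x) := by
  rw [sigmoid_neg, binEntropy_one_sub]

noncomputable def binEntropyDivSigmoid (x : ℝ) : ℝ := binEntropy (sigmoid x) / sigmoid x

lemma sigmoid_mul_binEntropyDivSigmoid (x : ℝ) :
    sigmoid x * binEntropyDivSigmoid x = binEntropy (sigmoid x) :=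
  mul_div_cancel₀ _ (sigmoid_pos x).ne'

lemma binEntropyDivSigmoid_neg (x : ℝ) :
    binEntropyDivSigmoid (-x) = exp x * binEntropyDivSigmoid x := by
  rw [binEntropyDivSigmoid, binEntropyDivSigmoid, binEntropy_sigmoid_neg, ← sigmoid_mul_rexp_neg,
    exp_neg]
  field_simp

lemma binEntropyDivSigmoid_eq (x : ℝ) :
    binEntropyDivSigmoid x = (1 + exp (-x)) * log (1 + exp x) - x := by
  have hlog : log (1 + exp (-x)) = log (1 + exp x) - x := by
    rw [show 1 + exp (-x) = exp (-x) * (1 + exp x) by rw [mul_add, ← exp_add]; simp [add_comm],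
      log_mul (exp_pos _).ne' (by positivity), log_exp]
    ring
  rw [binEntropyDivSigmoid, binEntropy, ← sigmoid_neg, sigmoid_def, sigmoid_def, neg_neg, inv_inv,
    inv_inv, hlog, exp_neg]
  field_simp
  ring

lemma convexOn_binEntropyDivSigmoid : ConvexOn ℝ univ binEntropyDivSigmoid := by
  have hφ' (x : ℝ) : HasDerivAt binEntropyDivSigmoid (-(exp (-x) * log (1 + exp x))) x := by
    rw [funext binEntropyDivSigmoid_eq]
    have h := (((hasDerivAt_neg x).exp.const_add 1).mul
      (((hasDerivAt_exp x).const_add 1).log (by positivity))).sub (hasDerivAt_id x)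
    refine h.congr_deriv ?_
    rw [exp_neg]
    field_simp
    ring
  have hφ'' (x : ℝ) : HasDerivAt (fun x => -(exp (-x) * log (1 + exp x)))
      (exp (-x) * (log (1 + exp x) - (1 - (1 + exp x)⁻¹))) x := by
    have h := ((hasDerivAt_neg x).exp.mul
      (((hasDerivAt_exp x).const_add 1).log (by positivity))).neg
    refine h.congr_deriv ?_
    rw [exp_neg]
    field_simp
    ring
  refine convexOn_of_hasDerivWithinAt2_nonneg convex_univ
    (fun x _ => (hφ' x).continuousAt.continuousWithinAt) (fun x _ => (hφ' x).hasDerivWithinAt)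
    (fun x _ => (hφ'' x).hasDerivWithinAt) fun x _ => ?_
  exact mul_nonneg (exp_pos _).le (sub_nonneg.2 (one_sub_inv_le_log_of_pos (by positivity)))

lemma midpoint_binEntropyDivSigmoid_le (x y : ℝ) :
    2 * exp y * exp ((x - y) / 2) * (exp ((x - y) / 2) + 1) * binEntropyDivSigmoid ((x - y) / 2) ≤
      exp x * (1 + exp y) * binEntropyDivSigmoid x +
        exp y * (1 + exp x) * binEntropyDivSigmoid y := by
  have hmid (a b : ℝ) : binEntropyDivSigmoid ((a + b) / 2) ≤
      (binEntropyDivSigmoid a + binEntropyDivSigmoid b) / 2 := by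
    have h := convexOn_binEntropyDivSigmoid.2 (mem_univ a) (mem_univ b)
      (by norm_num : (0 : ℝ) ≤ 1 / 2) (by norm_num : (0 : ℝ) ≤ 1 / 2) (by norm_num)
    simp only [smul_eq_mul] at h
    calc binEntropyDivSigmoid ((a + b) / 2)
        = binEntropyDivSigmoid (1 / 2 * a + 1 / 2 * b) := by ring_nf
      _ ≤ _ := h
      _ = _ := by ring
  have h₁ := hmid x (-y)
  have h₂ := hmid (-x) y
  rw [binEntropyDivSigmoid_neg, show (x + -y) / 2 = (x - y) / 2 by ring] at h₁
  rw [binEntropyDivSigmoid_neg, show (-x + y) / 2 = -((x - y) / 2) by ring,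
    binEntropyDivSigmoid_neg] at h₂
  have h₁' := mul_le_mul_of_nonneg_left h₁ (exp_pos x).le
  have h₂' := mul_le_mul_of_nonneg_left h₂ (exp_pos y).le
  rw [exp_eq_exp_mul_exp_half_sub_sq x y] at h₁' h₂' ⊢
  linarith

lemma sub_mul_L_sigmoid_le {x y : ℝ} (hxy : y < x) :
    (sigmoid x - sigmoid y) * L (sigmoid ((y - x) / 2)) ≤ H2 (sigmoid x) + H2 (sigmoid y) := by
  set τ := (x - y) / 2
  have hT : 1 < exp τ := one_lt_exp_iff.2 (half_pos (sub_pos.2 hxy))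
  have hD : 0 < (1 + exp x) * (1 + exp y) * log 2 := by positivity
  have hL : (sigmoid x - sigmoid y) * L (sigmoid ((y - x) / 2)) =
      2 * exp y * exp τ * (exp τ + 1) * binEntropyDivSigmoid τ /
        ((1 + exp x) * (1 + exp y) * log 2) := by
    have hT' : exp τ - 1 ≠ 0 := by linarith
    have hden : 1 - 2 * sigmoid (-τ) = (exp τ - 1) / (exp τ + 1) := by
      rw [sigmoid_def, neg_neg]
      field_simp
      ring
    rw [show (y - x) / 2 = -τ by ring, L, hden, H2_eq_binEntropy_div_log_two,
      binEntropy_sigmoid_neg, ← sigmoid_mul_binEntropyDivSigmoid, sigmoid_def, sigmoid_def,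
      sigmoid_def, exp_neg, exp_neg, exp_neg, exp_eq_exp_mul_exp_half_sub_sq x y]
    field_simp
    ring
  have hH : H2 (sigmoid x) + H2 (sigmoid y) =
      (exp x * (1 + exp y) * binEntropyDivSigmoid x +
        exp y * (1 + exp x) * binEntropyDivSigmoid y) / ((1 + exp x) * (1 + exp y) * log 2) := by
    rw [H2_eq_binEntropy_div_log_two, H2_eq_binEntropy_div_log_two,
      ← sigmoid_mul_binEntropyDivSigmoid, ← sigmoid_mul_binEntropyDivSigmoid, sigmoid_def,
      sigmoid_def, exp_neg, exp_neg]
    field_simp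
    ring
  rw [hL, hH]
  exact div_le_div_of_nonneg_right (midpoint_binEntropyDivSigmoid_le x y) hD.le

lemma strictMonoOn_L : StrictMonoOn L (Ico 0 (1 / 2)) := by
  intro p hp q hq hpq
  have hH : H2 p ≤ H2 q := monotoneOn_H2 ⟨hp.1, hp.2.le⟩ ⟨hq.1, hq.2.le⟩ hpq.le
  have hq₀ : 0 < H2 q := H2_pos (hp.1.trans_lt hpq) (by linarith [hq.2])
  have hp₁ : 0 < 1 - 2 * p := by linarith [hp.2]
  calc L p ≤ 2 * H2 q / (1 - 2 * p) := by rw [L]; gcongr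
    _ < L q := div_lt_div_of_pos_left (by positivity) (by linarith [hq.2]) (by linarith)

lemma continuousOn_L : ContinuousOn L (Ico 0 (1 / 2)) :=
  (continuous_const.mul continuous_H2).continuousOn.div (by fun_prop)
    fun x hx => by linarith [hx.2]

lemma tendsto_L_nhdsLT : Tendsto L (𝓝[<] (1 / 2)) atTop := by
  have hH₂ : H2 (1 / 2) = 1 := by
    rw [H2_eq_binEntropy_div_log_two, one_div, binEntropy_two_inv,
      div_self (log_pos one_lt_two).ne']
  have hH : Tendsto (fun u => 2 * H2 u) (𝓝[<] (1 / 2)) (𝓝 2) :=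
    ((continuous_const.mul continuous_H2).tendsto' _ _
      (by show 2 * H2 (1 / 2) = 2; rw [hH₂, mul_one])).mono_left nhdsWithin_le_nhds
  have hden : Tendsto (fun u : ℝ => 1 - 2 * u) (𝓝[<] (1 / 2)) (𝓝[>] 0) := by
    refine tendsto_nhdsWithin_iff.2 ⟨?_, eventually_nhdsWithin_of_forall fun u hu => ?_⟩
    · exact ((by fun_prop : Continuous fun u : ℝ => 1 - 2 * u).tendsto' _ _
        (by norm_num)).mono_left nhdsWithin_le_nhds
    · simp only [mem_Ioi, sub_pos]; linarith [mem_Iio.1 hu]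
  exact hH.pos_mul_atTop two_pos (tendsto_inv_nhdsGT_zero.comp hden)

lemma surjOn_L : SurjOn L (Ico 0 (1 / 2)) (Ici 0) := by
  have hL₀ : L 0 = 0 := by simp [L, H2_eq_binEntropy_div_log_two]
  have h := isPreconnected_Ico.intermediate_value_Ici (left_mem_Ico.2 (by norm_num))
    (le_principal_iff.2 (Ico_mem_nhdsLT (by norm_num))) continuousOn_L tendsto_L_nhdsLT
  rwa [hL₀] at h

lemma Linv_mem_Ico {s : ℝ} (hs : 0 ≤ s) : Linv s ∈ Ico 0 (1 / 2) :=
  Function.invFunOn_mem (surjOn_L hs)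

lemma le_Linv {v s : ℝ} (hv : v ∈ Ico 0 (1 / 2)) (hs : 0 ≤ s) (hvs : L v ≤ s) : v ≤ Linv s := by
  rwa [← strictMonoOn_L.le_iff_le hv (Linv_mem_Ico hs), Linv, Function.invFunOn_eq (surjOn_L hs)]

lemma J_sigmoid (x : ℝ) : J (sigmoid x) = -x / log 2 := by
  rw [J, ← sigmoid_neg, ← sigmoid_mul_rexp_neg, mul_div_cancel_left₀ _ (sigmoid_pos x).ne', logb,
    log_exp]

lemma antitoneOn_J : AntitoneOn J (Ioo 0 1) := by
  intro a ha b hb hab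
  have hb' : 0 < (1 - b) / b := div_pos (by linarith [hb.2]) hb.1
  refine logb_le_logb_of_le one_lt_two hb' ?_
  rw [sub_div, sub_div, div_self ha.1.ne', div_self hb.1.ne']
  exact sub_le_sub_right (one_div_le_one_div_of_le ha.1 hab) 1

lemma abs_mul_J_Linv_sigmoid_le {x y : ℝ} (hxy : y < x) :
    |sigmoid x - sigmoid y| *
        J (Linv ((H2 (sigmoid x) + H2 (sigmoid y)) / |sigmoid x - sigmoid y|)) ≤
      1 / 2 * (sigmoid x - sigmoid y) * (J (sigmoid y) - J (sigmoid x)) := by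
  have hpos : 0 < sigmoid x - sigmoid y := sub_pos.2 (sigmoid_strictMono hxy)
  rw [abs_of_pos hpos]
  set v := sigmoid ((y - x) / 2)
  set s := (H2 (sigmoid x) + H2 (sigmoid y)) / (sigmoid x - sigmoid y)
  have hv : v ∈ Ico 0 (1 / 2) := by
    refine ⟨(sigmoid_pos _).le, ?_⟩
    rw [one_div, ← sigmoid_zero]
    exact sigmoid_lt (by linarith)
  have hs : 0 ≤ s := div_nonneg (add_nonneg (H2_pos (sigmoid_pos x) (sigmoid_lt_one x)).le
    (H2_pos (sigmoid_pos y) (sigmoid_lt_one y)).le) hpos.le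
  have hvs : v ≤ Linv s :=
    le_Linv hv hs ((le_div_iff₀ hpos).2 (by rw [mul_comm]; exact sub_mul_L_sigmoid_le hxy))
  have hJ : J (Linv s) ≤ J v := antitoneOn_J ⟨sigmoid_pos _, sigmoid_lt_one _⟩
    ⟨(sigmoid_pos _).trans_le hvs, (Linv_mem_Ico hs).2.trans (by norm_num)⟩ hvs
  calc (sigmoid x - sigmoid y) * J (Linv s) ≤ (sigmoid x - sigmoid y) * J v :=
        mul_le_mul_of_nonneg_left hJ hpos.le
    _ = _ := by rw [J_sigmoid, J_sigmoid, J_sigmoid]; ring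

lemma abs_mul_J_Linv_le {u w : ℝ} (hu : u ∈ Ioo 0 1) (hw : w ∈ Ioo 0 1) (huw : u ≠ w) :
    |u - w| * J (Linv ((H2 u + H2 w) / |u - w|)) ≤ 1 / 2 * (u - w) * (J w - J u) := by
  rw [← range_sigmoid] at hu hw
  obtain ⟨x, rfl⟩ := hu
  obtain ⟨y, rfl⟩ := hw
  rcases lt_or_gt_of_ne (sigmoid_injective.ne_iff.1 huw) with h | h
  · have := abs_mul_J_Linv_sigmoid_le h
    rw [abs_sub_comm, add_comm] at this
    linarith
  · exact abs_mul_J_Linv_sigmoid_le h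

theorem stmt18 :
    (∀ u w : ℝ, u ∈ Set.Ioo (0 : ℝ) 1 → w ∈ Set.Ioo (0 : ℝ) 1 → u ≠ w →
      (1 / 2) * (u - w) * (J w - J u) ≥
        |u - w| * J (Linv ((H2 u + H2 w) / |u - w|))) ∧
    (∀ u w : ℝ, u ∈ Set.Ioo (0 : ℝ) 1 → w ∈ Set.Ioo (0 : ℝ) 1 → 0 ≤ kappa u w) := by
  refine ⟨fun u w hu hw huw => abs_mul_J_Linv_le hu hw huw, fun u w hu hw => ?_⟩
  rw [kappa]
  split_ifs with huw
  · exact le_rfl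
  · linarith [abs_mul_J_Linv_le hu hw huw]
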